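/- arXiv:1512.00781 — 2 statements merged into one kernel-verified Lean document; each statement's English description precedes it below -/
import Mathlib

section
/- For a cube Λ of side L in ℝ^d and R > 0, the hard-core configuration space satisfies the lower bound Z^hc_{n,Λ,R} ≥ (1/n!) ∏_{k=0}^{n-1} max(|Λ| - k·V_d(2R), 0), where V_d(r) is the volume of the d-dimensional ball of radius r. In particular if n·V_d(2R) ≤ |Λ|/2 then Z^hc_{n,Λ,R} ≥ (|Λ|/2)ⁿ/n!. -/
open MeasureTheory

def hcConfig (d n : ℕ) (Λ : Set (EuclideanSpace ℝ (Fin d))) (R : ℝ) :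
    Set (Fin n → EuclideanSpace ℝ (Fin d)) :=
  {q | (∀ i, q i ∈ Λ) ∧ ∀ i j, i ≠ j → R < dist (q i) (q j)}

noncomputable def Zhc (d n : ℕ) (Λ : Set (EuclideanSpace ℝ (Fin d))) (R : ℝ) : ℝ :=
  (volume (hcConfig d n Λ R)).toReal / Nat.factorial n

/-- Volume of the `d`-dimensional Euclidean ball of radius `r`. -/
noncomputable def Vball (d : ℕ) (r : ℝ) : ℝ :=
  (volume (Metric.closedBall (0 : EuclideanSpace ℝ (Fin d)) r)).toReal

/-! Particles are placed one at a time. Given an admissible configuration `q` of `n` particles,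
the next one may go anywhere in `Λ` outside the closed balls of radius `R` around the `q i`,
a set of volume at least `|Λ| - n · V_d(R)`. Tonelli over the new particle's position gives
`vol(config_{n+1}) ≥ (|Λ| - n · V_d(R)) · vol(config_n)`, and `V_d(R) ≤ V_d(2R)`. -/

open ENNReal Metric

variable {d : ℕ}

lemma measurableSet_hcConfig {n : ℕ} {Λ : Set (EuclideanSpace ℝ (Fin d))} (R : ℝ)
    (hΛ : MeasurableSet Λ) : MeasurableSet (hcConfig d n Λ R) := by
  simp only [hcConfig, Set.ofPred_and, Set.ofPred_forall]
  exact .inter (.iInter fun i => measurable_pi_apply i hΛ) <|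
    .iInter fun i => .iInter fun j => .iInter fun _ =>
      measurableSet_lt measurable_const (by fun_prop)

lemma cons_mem_hcConfig_iff {n : ℕ} {Λ : Set (EuclideanSpace ℝ (Fin d))} {R : ℝ}
    {x : EuclideanSpace ℝ (Fin d)} {q : Fin n → EuclideanSpace ℝ (Fin d)} :
    Fin.cons x q ∈ hcConfig d (n + 1) Λ R ↔
      q ∈ hcConfig d n Λ R ∧ x ∈ Λ ∧ ∀ i, R < dist x (q i) := by
  simp only [hcConfig, Set.mem_ofPred_eq, Fin.forall_fin_succ, Fin.cons_zero, Fin.cons_succ,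
    ne_eq, Fin.succ_inj, Fin.succ_ne_zero, not_false_eq_true, forall_const, not_true_eq_false,
    false_imp_iff, true_and, dist_comm (q _) x, eq_comm (a := (0 : Fin (n + 1))),
    forall_and]
  tauto

lemma measure_sub_mul_le_measure_diff_iUnion {α ι : Type*} [MeasurableSpace α] [Fintype ι]
    {μ : Measure α} (s : Set α) (t : ι → Set α) {V : ℝ≥0∞}
    (ht : ∀ i, μ (t i) ≤ V) :
    μ s - Fintype.card ι * V ≤ μ (s \ ⋃ i, t i) :=
  calc μ s - Fintype.card ι * V
      ≤ μ s - μ (⋃ i, t i) := by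
        gcongr
        calc μ (⋃ i, t i) ≤ ∑ i, μ (t i) := measure_iUnion_fintype_le μ t
          _ ≤ ∑ _i : ι, V := Finset.sum_le_sum fun i _ => ht i
          _ = Fintype.card ι * V := by simp
    _ ≤ μ (s \ ⋃ i, t i) := le_measure_sdiff

lemma volume_eq_lintegral_volume_cons {α : Type*} [MeasureSpace α]
    [SigmaFinite (volume : Measure α)] {n : ℕ} {s : Set (Fin (n + 1) → α)}
    (hs : MeasurableSet s) :
    volume s = ∫⁻ q : Fin n → α, volume {x | (Fin.cons x q : Fin (n + 1) → α) ∈ s} := by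
  have he := (volume_preserving_piFinSuccAbove (fun _ : Fin (n + 1) => α) 0).symm
  rw [← he.measure_preimage hs.nullMeasurableSet, Measure.volume_eq_prod,
    Measure.prod_apply_symm (he.measurable hs)]
  simp only [MeasurableEquiv.piFinSuccAbove_symm_apply, Fin.insertNthEquiv, Fin.insertNth_zero',
    Equiv.coe_fn_mk]
  rfl

lemma prod_sub_mul_volume_closedBall_le_volume_hcConfig {Λ : Set (EuclideanSpace ℝ (Fin d))}
    (hΛ : MeasurableSet Λ) (R : ℝ) (n : ℕ) :
    ∏ k ∈ Finset.range n,
        (volume Λ - k * volume (closedBall (0 : EuclideanSpace ℝ (Fin d)) R))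
      ≤ volume (hcConfig d n Λ R) := by
  set V := volume (closedBall (0 : EuclideanSpace ℝ (Fin d)) R)
  induction n with
  | zero =>
    have : hcConfig d 0 Λ R = Set.univ := by ext q; simp [hcConfig]
    simp [this, volume_pi]
  | succ n ih =>
    have slice : ∀ q ∈ hcConfig d n Λ R,
        volume Λ - n * V ≤ volume {x | Fin.cons x q ∈ hcConfig d (n + 1) Λ R} := by
      intro q hq
      calc volume Λ - n * V ≤ volume (Λ \ ⋃ i, closedBall (q i) R) := by
            simpa using measure_sub_mul_le_measure_diff_iUnion Λ (fun i => closedBall (q i) R)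
              fun i => (Measure.addHaar_closedBall_center volume (q i) R).le
        _ ≤ _ := measure_mono fun x hx =>
            cons_mem_hcConfig_iff.2 ⟨hq, hx.1, by simpa using hx.2⟩
    calc ∏ k ∈ Finset.range (n + 1), (volume Λ - k * V)
        ≤ (volume Λ - n * V) * volume (hcConfig d n Λ R) := by
          rw [Finset.prod_range_succ, mul_comm]; gcongr
      _ = ∫⁻ q, (hcConfig d n Λ R).indicator (fun _ => volume Λ - n * V) q := by
          rw [lintegral_indicator_const (measurableSet_hcConfig R hΛ)]
      _ ≤ ∫⁻ q, volume {x | Fin.cons x q ∈ hcConfig d (n + 1) Λ R} :=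
          lintegral_mono <| Set.indicator_le
            (g := fun q => volume {x | Fin.cons x q ∈ hcConfig d (n + 1) Λ R}) slice
      _ = volume (hcConfig d (n + 1) Λ R) :=
          (volume_eq_lintegral_volume_cons (measurableSet_hcConfig R hΛ)).symm

lemma volume_hcConfig_le (n : ℕ) (Λ : Set (EuclideanSpace ℝ (Fin d))) (R : ℝ) :
    volume (hcConfig d n Λ R) ≤ volume Λ ^ n :=
  calc volume (hcConfig d n Λ R) ≤ volume (Set.univ.pi fun _ : Fin n => Λ) :=
        measure_mono fun q hq i _ => hq.1 i
    _ = volume Λ ^ n := by simp [volume_pi_pi]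

lemma prod_max_sub_mul_Vball_le_volume_hcConfig {Λ : Set (EuclideanSpace ℝ (Fin d))}
    (hΛ : MeasurableSet Λ) (hΛ_fin : volume Λ ≠ ∞) {R r : ℝ} (hRr : R ≤ r) (n : ℕ) :
    ∏ k ∈ Finset.range n, max ((volume Λ).toReal - k * Vball d r) 0
      ≤ (volume (hcConfig d n Λ R)).toReal := by
  set V := volume (closedBall (0 : EuclideanSpace ℝ (Fin d)) r)
  have hV : V ≠ ∞ := measure_closedBall_lt_top.ne
  have hfactor (k : ℕ) :
      max ((volume Λ).toReal - k * Vball d r) 0 ≤ (volume Λ - k * V).toReal :=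
    max_le (by simpa [Vball, V] using
      le_toReal_sub (a := volume Λ) (mul_ne_top (natCast_ne_top k) hV)) toReal_nonneg
  have hshrink : ∏ k ∈ Finset.range n, (volume Λ - k * V) ≤ volume (hcConfig d n Λ R) := by
    refine le_trans ?_ (prod_sub_mul_volume_closedBall_le_volume_hcConfig hΛ R n)
    gcongr with k
    exact measure_mono (closedBall_subset_closedBall hRr)
  calc ∏ k ∈ Finset.range n, max ((volume Λ).toReal - k * Vball d r) 0
      ≤ ∏ k ∈ Finset.range n, (volume Λ - k * V).toReal :=
        Finset.prod_le_prod (fun _ _ => le_max_right _ _) fun k _ => hfactor k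
    _ = (∏ k ∈ Finset.range n, (volume Λ - k * V)).toReal := (toReal_prod _ _).symm
    _ ≤ (volume (hcConfig d n Λ R)).toReal :=
        toReal_mono ((volume_hcConfig_le n Λ R).trans_lt (pow_lt_top hΛ_fin.lt_top)).ne hshrink

lemma pow_half_le_prod_max_sub_mul {A V : ℝ} {n : ℕ} (hV : 0 ≤ V) (hnV : n * V ≤ A / 2) :
    (A / 2) ^ n ≤ ∏ k ∈ Finset.range n, max (A - k * V) 0 := by
  have hA : 0 ≤ A / 2 := le_trans (by positivity) hnV
  rw [Finset.pow_eq_prod_const]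
  refine Finset.prod_le_prod (fun _ _ => hA) fun k hk => le_max_of_le_left ?_
  have : (k : ℝ) * V ≤ n * V := by gcongr; exact (Finset.mem_range.1 hk).le
  linarith

lemma isCompact_setOf_forall_mem_Icc {ι : Type*} [Fintype ι] (l u : ι → ℝ) :
    IsCompact {x : EuclideanSpace ℝ ι | ∀ i, x i ∈ Set.Icc (l i) (u i)} := by
  convert (EuclideanSpace.equiv ι ℝ).toHomeomorph.isCompact_preimage.2
    (isCompact_univ_pi fun i => isCompact_Icc (a := l i) (b := u i)) using 1
  ext x; simp [Pi.le_def, forall_and]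

theorem Zhc_lower_bound_cube_general
    (d n : ℕ) (R L : ℝ) (hR : 0 < R)
    (a : EuclideanSpace ℝ (Fin d))
    (Λ : Set (EuclideanSpace ℝ (Fin d)))
    (hΛ : Λ = {x | ∀ i, x i ∈ Set.Icc (a i) (a i + L)}) :
    ((∏ k ∈ Finset.range n,
        max ((volume Λ).toReal - k * Vball d (2 * R)) 0) / Nat.factorial n
      ≤ Zhc d n Λ R) ∧
    (n * Vball d (2 * R) ≤ (volume Λ).toReal / 2 →
      ((volume Λ).toReal / 2) ^ n / Nat.factorial n ≤ Zhc d n Λ R) := by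
  have hΛ_compact : IsCompact Λ := hΛ ▸ isCompact_setOf_forall_mem_Icc _ _
  have hbound := div_le_div_of_nonneg_right
    (prod_max_sub_mul_Vball_le_volume_hcConfig hΛ_compact.measurableSet
      hΛ_compact.measure_lt_top.ne (by linarith : R ≤ 2 * R) n) (Nat.cast_nonneg n.factorial)
  refine ⟨hbound, fun hsmall => le_trans ?_ hbound⟩
  gcongr
  exact pow_half_le_prod_max_sub_mul toReal_nonneg hsmall

/-- Lower bound for the hard-core partition function on a cube: sequential
placement of particles, each excluding volume at most `V_d(2R)`; in particular
`Z^hc ≥ (|Λ|/2)ⁿ/n!` when `n·V_d(2R) ≤ |Λ|/2`. -/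
theorem Zhc_lower_bound_cube
    (d n : ℕ) (R L : ℝ) (hR : 0 < R) (hL : 0 < L)
    (a : EuclideanSpace ℝ (Fin d))
    (Λ : Set (EuclideanSpace ℝ (Fin d)))
    (hΛ : Λ = {x | ∀ i, x i ∈ Set.Icc (a i) (a i + L)}) :
    ((∏ k ∈ Finset.range n,
        max ((volume Λ).toReal - k * Vball d (2 * R)) 0) / Nat.factorial n
      ≤ Zhc d n Λ R) ∧
    (n * Vball d (2 * R) ≤ (volume Λ).toReal / 2 →
      ((volume Λ).toReal / 2) ^ n / Nat.factorial n ≤ Zhc d n Λ R) :=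
  Zhc_lower_bound_cube_general d n R L hR a Λ hΛ
end

section
/- (Dobrushin contraction for finitely many sites) Let X be a finite set and suppose for each x ∈ X the single-site Vaserstein distances satisfy R(p(·|n¹), p(·|n²)) ≤ Σ_{z≠x} r(x,z) d(n¹_z, n²_z) with sup_x Σ_z r(x,z) ≤ u < 1, where d(m,n) = |m-n| on ℕ. Then for any two Gibbs fields μ¹, μ² on ℕ^X with these conditional distributions and identical specifications, μ¹ = μ², i.e., the Gibbs field with such specification is unique. -/
open scoped BigOperators ENNReal

/-- Vaserstein distance on finitely supported probabilities on `ℕ`,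
w.r.t. the distance `d(m,n) = |m-n|`. -/
noncomputable def natVaserstein (p q : PMF ℕ) : ℝ≥0∞ :=
  sInf {s | ∃ Q : PMF (ℕ × ℕ),
    Q.map Prod.fst = p ∧ Q.map Prod.snd = q ∧
    s = ∑' mn : ℕ × ℕ, Q mn * (Nat.dist mn.1 mn.2 : ℝ≥0∞)}

/-- `μ` is a Gibbs field for the single-site specification `p`: at each site `x`
the conditional distribution of `η x` given the rest is `p x (η off x)`. -/
def IsGibbsField {X : Type*} [Fintype X] [DecidableEq X]
    (p : (x : X) → ({y : X // y ≠ x} → ℕ) → PMF ℕ)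
    (μ : PMF (X → ℕ)) : Prop :=
  ∀ (x : X) (η : X → ℕ),
    μ η = (∑' k : ℕ, μ (Function.update η x k)) *
      (p x (fun y => η y.1)) (η x)

/-!
Run two copies of the heat-bath dynamics side by side: at the updated site the new spins are
drawn from an almost optimal coupling of the two single-site conditional laws. A Gibbs field is
invariant under its heat-bath updates, so the coupled chain started from any coupling of `μ₁`
and `μ₂` stays a coupling of `μ₁` and `μ₂`. By the Dobrushin condition a sweep through all sites
contracts the largest expected site distance by the factor `u`, up to the coupling error, so
from a fixed start the probability that the two configurations still differ after `n` sweeps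
is eventually at most `|X| c`, with `c` as small as we like. Averaging over the independent
initial coupling (reverse Fatou) bounds `μ₁ η - μ₂ η` by the same quantity.
-/

open Filter Topology MeasureTheory

namespace PMF

variable {α β γ δ : Type*}

noncomputable def expect (ν : PMF α) (f : α → ℝ≥0∞) : ℝ≥0∞ := ∑' a, ν a * f a

lemma expect_mono (ν : PMF α) {f g : α → ℝ≥0∞} (h : f ≤ g) : ν.expect f ≤ ν.expect g :=
  ENNReal.tsum_le_tsum fun a => mul_le_mul_right (h a) _

lemma expect_const (ν : PMF α) (c : ℝ≥0∞) : ν.expect (fun _ => c) = c := by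
  rw [expect, ENNReal.tsum_mul_right, ν.tsum_coe, one_mul]

lemma expect_add (ν : PMF α) (f g : α → ℝ≥0∞) :
    ν.expect (fun a => f a + g a) = ν.expect f + ν.expect g := by
  simp only [expect, mul_add, ENNReal.tsum_add]

lemma expect_const_mul (ν : PMF α) (c : ℝ≥0∞) (f : α → ℝ≥0∞) :
    ν.expect (fun a => c * f a) = c * ν.expect f := by
  simp only [expect, ← ENNReal.tsum_mul_left, mul_left_comm]

lemma expect_finset_sum {ι : Type*} (ν : PMF α) (t : Finset ι) (f : ι → α → ℝ≥0∞) :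
    ν.expect (fun a => ∑ i ∈ t, f i a) = ∑ i ∈ t, ν.expect (f i) := by
  simp only [expect, Finset.mul_sum]
  exact Summable.tsum_finsetSum fun _ _ => ENNReal.summable

lemma expect_pure (a : α) (f : α → ℝ≥0∞) : (pure a).expect f = f a := by
  simp [expect, pure_apply]

lemma expect_bind (ν : PMF α) (k : α → PMF β) (f : β → ℝ≥0∞) :
    (ν.bind k).expect f = ν.expect fun a => (k a).expect f := by
  simp only [expect, bind_apply, ← ENNReal.tsum_mul_right, ← ENNReal.tsum_mul_left, mul_assoc]
  exact ENNReal.tsum_comm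

lemma expect_map (ν : PMF α) (g : α → β) (f : β → ℝ≥0∞) :
    (ν.map g).expect f = ν.expect (f ∘ g) := by
  simp only [map, expect_bind, expect_pure, Function.comp_def]

lemma toOuterMeasure_le_expect (ν : PMF α) {s : Set α} {f : α → ℝ≥0∞}
    (hf : ∀ a ∈ s, 1 ≤ f a) : ν.toOuterMeasure s ≤ ν.expect f := by
  rw [toOuterMeasure_apply]
  refine ENNReal.tsum_le_tsum fun a => ?_
  by_cases ha : a ∈ s
  · simpa [ha] using le_mul_of_one_le_right zero_le (hf a ha)
  · simp [ha]

lemma toOuterMeasure_le_one (ν : PMF α) (s : Set α) : ν.toOuterMeasure s ≤ 1 :=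
  (measure_mono (Set.subset_univ s)).trans
    ((toOuterMeasure_apply_eq_one_iff _ _).2 (Set.subset_univ _)).le

def IsCoupling (ν : PMF (α × β)) (μ₁ : PMF α) (μ₂ : PMF β) : Prop :=
  ν.map Prod.fst = μ₁ ∧ ν.map Prod.snd = μ₂

lemma isCoupling_bind_map_prodMk (μ₁ : PMF α) (μ₂ : PMF β) :
    (μ₁.bind fun a => μ₂.map (Prod.mk a)).IsCoupling μ₁ μ₂ := by
  have hconst (a : α) : μ₂.map (fun _ => a) = pure a := map_const μ₂ a
  constructor
  · simp [map_bind, map_comp, Function.comp_def, hconst]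
  · simp only [map_bind, map_comp, Function.comp_def, bind_const]
    exact map_id μ₂

lemma IsCoupling.bind {ν : PMF (α × β)} {μ₁ : PMF α} {μ₂ : PMF β} (hν : ν.IsCoupling μ₁ μ₂)
    {K : α × β → PMF (γ × δ)} {k₁ : α → PMF γ} {k₂ : β → PMF δ}
    (hK : ∀ σ, (K σ).IsCoupling (k₁ σ.1) (k₂ σ.2)) :
    (ν.bind K).IsCoupling (μ₁.bind k₁) (μ₂.bind k₂) := by
  constructor
  · simp only [map_bind, fun σ => (hK σ).1, ← hν.1, bind_map]; rfl
  · simp only [map_bind, fun σ => (hK σ).2, ← hν.2, bind_map]; rfl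

lemma IsCoupling.apply_le_add {ν : PMF (α × α)} {μ₁ μ₂ : PMF α} (hν : ν.IsCoupling μ₁ μ₂)
    (a : α) : μ₁ a ≤ μ₂ a + ν.toOuterMeasure (Set.diagonal α)ᶜ := by
  rw [← hν.1, ← hν.2, ← toOuterMeasure_apply_singleton, ← toOuterMeasure_apply_singleton,
    toOuterMeasure_map_apply, toOuterMeasure_map_apply]
  have hsub : Prod.fst ⁻¹' {a} ⊆ Prod.snd ⁻¹' {a} ∪ (Set.diagonal α)ᶜ := by
    rintro σ (rfl : σ.1 = a)
    by_cases hd : σ.1 = σ.2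
    · exact Or.inl hd.symm
    · exact Or.inr hd
  exact (measure_mono hsub).trans (measure_union_le _ _)

lemma limsup_toOuterMeasure_bind_le (ν : PMF α) (K : ℕ → α → PMF β) (s : Set β) :
    limsup (fun n => (ν.bind (K n)).toOuterMeasure s) atTop ≤
      ∑' a, ν a * limsup (fun n => (K n a).toOuterMeasure s) atTop := by
  let : MeasurableSpace α := ⊤
  have hfatou := limsup_lintegral_le (μ := Measure.count)
    (f := fun n a => ν a * (K n a).toOuterMeasure s) ν (fun _ => Measurable.of_discrete)
    (fun n => Eventually.of_forall fun a =>
      mul_le_of_le_one_right zero_le (toOuterMeasure_le_one _ _))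
    (by rw [lintegral_count, ν.tsum_coe]; exact ENNReal.one_ne_top)
  simpa only [lintegral_count, toOuterMeasure_bind_apply,
    ENNReal.limsup_const_mul_of_ne_top (ν.apply_ne_top _)] using hfatou

end PMF

lemma exists_isCoupling_expect_dist_le {p q : PMF ℕ} {b ε : ℝ≥0∞}
    (h : natVaserstein p q ≤ b) (hε : ε ≠ 0) :
    ∃ Q : PMF (ℕ × ℕ), Q.IsCoupling p q ∧
      Q.expect (fun mn => Nat.dist mn.1 mn.2) ≤ b + ε := by
  by_cases hb : b = ⊤
  · exact ⟨_, PMF.isCoupling_bind_map_prodMk p q, by simp [hb]⟩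
  · obtain ⟨_, ⟨Q, hQ₁, hQ₂, rfl⟩, hQ⟩ :=
      sInf_lt_iff.1 (h.trans_lt (ENNReal.lt_add_right hb hε))
    exact ⟨Q, ⟨hQ₁, hQ₂⟩, hQ.le⟩

section HeatBath

variable {X : Type*} [DecidableEq X] (p : (x : X) → ({y : X // y ≠ x} → ℕ) → PMF ℕ)

noncomputable def heatBath (x : X) (η : X → ℕ) : PMF (X → ℕ) :=
  (p x fun y => η y).map (Function.update η x)

open Classical in
lemma heatBath_apply (x : X) (η η' : X → ℕ) :
    heatBath p x η η' =
      if Function.update η x (η' x) = η' then p x (fun y => η y) (η' x) else 0 := by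
  rw [heatBath, PMF.map_apply, tsum_eq_single (η' x)]
  · simp only [eq_comm]
  · intro k hk
    rw [if_neg]
    rintro rfl
    simp at hk

lemma IsGibbsField.bind_heatBath [Fintype X] {μ : PMF (X → ℕ)} (hμ : IsGibbsField p μ) (x : X) :
    μ.bind (heatBath p x) = μ := by
  ext η'
  have hsupp : Function.support (fun η => μ η * heatBath p x η η') ⊆
      Set.range (Function.update η' x) := by
    intro η hη
    refine ⟨η x, ?_⟩
    have hη' : Function.update η x (η' x) = η' := by
      by_contra hne
      simp [heatBath_apply, hne] at hη
    rw [← hη', Function.update_idem, Function.update_eq_self]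
  have hterm (m : ℕ) : μ (Function.update η' x m) * heatBath p x (Function.update η' x m) η' =
      μ (Function.update η' x m) * p x (fun y => η' y) (η' x) := by
    have hoff : (fun y : {y // y ≠ x} => Function.update η' x m y) =
        fun y : {y // y ≠ x} => η' y := funext fun y => Function.update_of_ne y.2 _ _
    simp [heatBath_apply, hoff]
  rw [PMF.bind_apply, ← (Function.update_injective η' x).tsum_eq hsupp]
  simp only [hterm, ENNReal.tsum_mul_right]
  exact (hμ x η').symm

end HeatBath

section CoupledDynamics

variable {X : Type*} [DecidableEq X]
  (C : (x : X) → ({y : X // y ≠ x} → ℕ) → ({y : X // y ≠ x} → ℕ) → PMF (ℕ × ℕ))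

noncomputable def coupledStep (x : X) (σ : (X → ℕ) × (X → ℕ)) : PMF ((X → ℕ) × (X → ℕ)) :=
  (C x (fun y => σ.1 y) (fun y => σ.2 y)).map
    fun mn => (Function.update σ.1 x mn.1, Function.update σ.2 x mn.2)

noncomputable def coupledSweep : List X → (X → ℕ) × (X → ℕ) → PMF ((X → ℕ) × (X → ℕ))
  | [] => PMF.pure
  | x :: l => fun σ => (coupledStep C x σ).bind (coupledSweep l)

lemma bind_coupledSweep_nil (ν : PMF ((X → ℕ) × (X → ℕ))) : ν.bind (coupledSweep C []) = ν :=
  ν.bind_pure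

lemma bind_coupledSweep_cons (x : X) (l : List X) (ν : PMF ((X → ℕ) × (X → ℕ))) :
    ν.bind (coupledSweep C (x :: l)) = (ν.bind (coupledStep C x)).bind (coupledSweep C l) :=
  (ν.bind_bind _ _).symm

lemma bind_coupledSweep_append (l₁ l₂ : List X) (ν : PMF ((X → ℕ) × (X → ℕ))) :
    ν.bind (coupledSweep C (l₁ ++ l₂)) =
      (ν.bind (coupledSweep C l₁)).bind (coupledSweep C l₂) := by
  induction l₁ generalizing ν with
  | nil => rw [List.nil_append, bind_coupledSweep_nil]
  | cons x l₁ ih => rw [List.cons_append, bind_coupledSweep_cons, ih, bind_coupledSweep_cons]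

variable {C} {p : (x : X) → ({y : X // y ≠ x} → ℕ) → PMF ℕ}

lemma isCoupling_coupledStep (hC : ∀ x ξ₁ ξ₂, (C x ξ₁ ξ₂).IsCoupling (p x ξ₁) (p x ξ₂))
    (x : X) (σ : (X → ℕ) × (X → ℕ)) :
    (coupledStep C x σ).IsCoupling (heatBath p x σ.1) (heatBath p x σ.2) := by
  obtain ⟨h₁, h₂⟩ := hC x (fun y => σ.1 y) (fun y => σ.2 y)
  exact ⟨by rw [coupledStep, PMF.map_comp, heatBath, ← h₁, PMF.map_comp]; rfl,
    by rw [coupledStep, PMF.map_comp, heatBath, ← h₂, PMF.map_comp]; rfl⟩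

lemma PMF.IsCoupling.bind_coupledSweep
    (hC : ∀ x ξ₁ ξ₂, (C x ξ₁ ξ₂).IsCoupling (p x ξ₁) (p x ξ₂)) {μ₁ μ₂ : PMF (X → ℕ)}
    (h₁ : ∀ x, μ₁.bind (heatBath p x) = μ₁) (h₂ : ∀ x, μ₂.bind (heatBath p x) = μ₂)
    {ν : PMF ((X → ℕ) × (X → ℕ))} (hν : ν.IsCoupling μ₁ μ₂) (l : List X) :
    (ν.bind (coupledSweep C l)).IsCoupling μ₁ μ₂ := by
  induction l generalizing ν with
  | nil => rwa [bind_coupledSweep_nil]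
  | cons x l ih =>
    rw [bind_coupledSweep_cons]
    refine ih ?_
    simpa only [h₁ x, h₂ x] using hν.bind (isCoupling_coupledStep hC x)

end CoupledDynamics

section Contraction

variable {X : Type*} [DecidableEq X]
  {C : (x : X) → ({y : X // y ≠ x} → ℕ) → ({y : X // y ≠ x} → ℕ) → PMF (ℕ × ℕ)}

noncomputable def expectedDist (z : X) (ν : PMF ((X → ℕ) × (X → ℕ))) : ℝ≥0∞ :=
  ν.expect fun σ => Nat.dist (σ.1 z) (σ.2 z)

lemma expectedDist_bind_coupledStep_of_ne {x z : X} (hz : z ≠ x)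
    (ν : PMF ((X → ℕ) × (X → ℕ))) :
    expectedDist z (ν.bind (coupledStep C x)) = expectedDist z ν := by
  simp [expectedDist, PMF.expect_bind, coupledStep, PMF.expect_map, Function.comp_def,
    Function.update_of_ne hz, PMF.expect_const]

variable [Fintype X] {r : X → X → ℝ≥0∞} {u ε : ℝ≥0∞}

lemma expectedDist_bind_coupledStep_self_le
    (hC : ∀ x ξ₁ ξ₂, (C x ξ₁ ξ₂).expect (fun mn => Nat.dist mn.1 mn.2) ≤
      ∑ z : {y // y ≠ x}, r x z * Nat.dist (ξ₁ z) (ξ₂ z) + ε)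
    (hr : ∀ x, ∑ z : {y // y ≠ x}, r x z ≤ u) {ν : PMF ((X → ℕ) × (X → ℕ))} {M : ℝ≥0∞}
    (hν : ∀ z, expectedDist z ν ≤ M) (x : X) :
    expectedDist x (ν.bind (coupledStep C x)) ≤ u * M + ε :=
  calc expectedDist x (ν.bind (coupledStep C x))
      = ν.expect fun σ => (C x (fun y => σ.1 y) (fun y => σ.2 y)).expect
          fun mn => Nat.dist mn.1 mn.2 := by
        simp [expectedDist, PMF.expect_bind, coupledStep, PMF.expect_map, Function.comp_def]
    _ ≤ ν.expect fun σ => ∑ z : {y // y ≠ x}, r x z * Nat.dist (σ.1 z) (σ.2 z) + ε :=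
        PMF.expect_mono _ fun σ => hC x _ _
    _ = ∑ z : {y // y ≠ x}, r x z * expectedDist z.1 ν + ε := by
        simp only [PMF.expect_add, PMF.expect_finset_sum, PMF.expect_const_mul, PMF.expect_const,
          expectedDist]
    _ ≤ ∑ z : {y // y ≠ x}, r x z * M + ε := by gcongr; exact hν _
    _ ≤ u * M + ε := by rw [← Finset.sum_mul]; gcongr; exact hr x

lemma expectedDist_bind_coupledSweep_le
    (hC : ∀ x ξ₁ ξ₂, (C x ξ₁ ξ₂).expect (fun mn => Nat.dist mn.1 mn.2) ≤
      ∑ z : {y // y ≠ x}, r x z * Nat.dist (ξ₁ z) (ξ₂ z) + ε)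
    (hr : ∀ x, ∑ z : {y // y ≠ x}, r x z ≤ u) {M : ℝ≥0∞} (hM : u * M + ε ≤ M)
    (l : List X) {ν : PMF ((X → ℕ) × (X → ℕ))} (hν : ∀ z, expectedDist z ν ≤ M) (z : X) :
    expectedDist z (ν.bind (coupledSweep C l)) ≤
      if z ∈ l then u * M + ε else expectedDist z ν := by
  induction l generalizing ν with
  | nil => simp [bind_coupledSweep_nil]
  | cons x l ih =>
    have hx := expectedDist_bind_coupledStep_self_le hC hr hν x
    have hν' : ∀ z, expectedDist z (ν.bind (coupledStep C x)) ≤ M := by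
      intro z
      rcases eq_or_ne z x with rfl | hzx
      · exact hx.trans hM
      · rw [expectedDist_bind_coupledStep_of_ne hzx]
        exact hν z
    rw [bind_coupledSweep_cons]
    refine (ih hν').trans ?_
    by_cases hzl : z ∈ l
    · simp [hzl]
    rcases eq_or_ne z x with rfl | hzx
    · simpa [hzl] using hx
    · simp [hzl, hzx, expectedDist_bind_coupledStep_of_ne hzx]

lemma expectedDist_bind_coupledSweep_replicate_le
    (hC : ∀ x ξ₁ ξ₂, (C x ξ₁ ξ₂).expect (fun mn => Nat.dist mn.1 mn.2) ≤
      ∑ z : {y // y ≠ x}, r x z * Nat.dist (ξ₁ z) (ξ₂ z) + ε)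
    (hr : ∀ x, ∑ z : {y // y ≠ x}, r x z ≤ u) (hu : u ≤ 1) {c : ℝ≥0∞} (hc : u * c + ε ≤ c)
    {L : List X} (hL : ∀ x, x ∈ L) (n : ℕ) {ν : PMF ((X → ℕ) × (X → ℕ))} {M : ℝ≥0∞}
    (hν : ∀ z, expectedDist z ν ≤ M + c) (z : X) :
    expectedDist z (ν.bind (coupledSweep C (List.replicate n L).flatten)) ≤ u ^ n * M + c := by
  induction n generalizing ν M with
  | zero => simpa [bind_coupledSweep_nil] using hν z
  | succ n ih =>
    -- one sweep maps the bound `M + c` to `u * M + c`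
    have hfix : u * (M + c) + ε ≤ M + c :=
      calc u * (M + c) + ε = u * M + (u * c + ε) := by ring
        _ ≤ M + c := add_le_add (mul_le_of_le_one_left zero_le hu) hc
    rw [List.replicate_succ, List.flatten_cons, bind_coupledSweep_append]
    refine (ih (M := u * M) fun z => ?_).trans_eq (by ring)
    have hsweep := expectedDist_bind_coupledSweep_le hC hr hfix L hν z
    rw [if_pos (hL z)] at hsweep
    calc _ ≤ u * (M + c) + ε := hsweep
      _ = u * M + (u * c + ε) := by ring
      _ ≤ u * M + c := by gcongr

end Contraction

section Uniqueness

variable {X : Type*} [Fintype X]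

lemma one_le_sum_dist_of_ne {η₁ η₂ : X → ℕ} (h : η₁ ≠ η₂) :
    1 ≤ ∑ z, (Nat.dist (η₁ z) (η₂ z) : ℝ≥0∞) := by
  obtain ⟨z, hz⟩ := Function.ne_iff.1 h
  calc (1 : ℝ≥0∞) ≤ Nat.dist (η₁ z) (η₂ z) := by
        exact_mod_cast Nat.pos_of_ne_zero (mt Nat.eq_of_dist_eq_zero hz)
    _ ≤ _ := Finset.single_le_sum (f := fun z => (Nat.dist (η₁ z) (η₂ z) : ℝ≥0∞))
        (fun _ _ => zero_le) (Finset.mem_univ z)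

variable [DecidableEq X]
  {C : (x : X) → ({y : X // y ≠ x} → ℕ) → ({y : X // y ≠ x} → ℕ) → PMF (ℕ × ℕ)}
  {r : X → X → ℝ≥0∞} {u ε : ℝ≥0∞}

lemma limsup_toOuterMeasure_coupledSweep_replicate_le
    (hC : ∀ x ξ₁ ξ₂, (C x ξ₁ ξ₂).expect (fun mn => Nat.dist mn.1 mn.2) ≤
      ∑ z : {y // y ≠ x}, r x z * Nat.dist (ξ₁ z) (ξ₂ z) + ε)
    (hr : ∀ x, ∑ z : {y // y ≠ x}, r x z ≤ u) (hu : u < 1) {c : ℝ≥0∞} (hc : u * c + ε ≤ c)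
    {L : List X} (hL : ∀ x, x ∈ L) (σ : (X → ℕ) × (X → ℕ)) :
    limsup (fun n => (coupledSweep C (List.replicate n L).flatten σ).toOuterMeasure
      (Set.diagonal _)ᶜ) atTop ≤ Fintype.card X * c := by
  set D := ∑ z, (Nat.dist (σ.1 z) (σ.2 z) : ℝ≥0∞)
  have hbound (n : ℕ) : (coupledSweep C (List.replicate n L).flatten σ).toOuterMeasure
      (Set.diagonal _)ᶜ ≤ Fintype.card X * (u ^ n * D + c) := by
    have hD (z : X) : expectedDist z (PMF.pure σ) ≤ D + c := by
      rw [expectedDist, PMF.expect_pure]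
      exact (Finset.single_le_sum (f := fun z => (Nat.dist (σ.1 z) (σ.2 z) : ℝ≥0∞))
        (fun _ _ => zero_le) (Finset.mem_univ z)).trans le_self_add
    have hA := expectedDist_bind_coupledSweep_replicate_le hC hr hu.le hc hL n hD
    rw [PMF.pure_bind] at hA
    calc _ ≤ (coupledSweep C (List.replicate n L).flatten σ).expect
          (fun τ => ∑ z, (Nat.dist (τ.1 z) (τ.2 z) : ℝ≥0∞)) :=
          PMF.toOuterMeasure_le_expect _ fun τ hτ => one_le_sum_dist_of_ne hτ
      _ ≤ ∑ _z : X, (u ^ n * D + c) := by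
          rw [PMF.expect_finset_sum]
          exact Finset.sum_le_sum fun z _ => hA z
      _ = Fintype.card X * (u ^ n * D + c) := by
          rw [Finset.sum_const, Finset.card_univ, nsmul_eq_mul]
  have hlim : Tendsto (fun n => (Fintype.card X : ℝ≥0∞) * (u ^ n * D + c)) atTop
      (𝓝 (Fintype.card X * c)) := by
    have hD : D ≠ ⊤ := ENNReal.sum_ne_top.2 fun _ _ => ENNReal.natCast_ne_top _
    simpa using ENNReal.Tendsto.const_mul ((ENNReal.Tendsto.mul_const
      (ENNReal.tendsto_pow_atTop_nhds_zero_of_lt_one hu) (Or.inr hD)).add_const c)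
      (Or.inr (ENNReal.natCast_ne_top _))
  exact (limsup_le_limsup (Eventually.of_forall hbound)).trans hlim.limsup_eq.le

lemma IsGibbsField.apply_le_of_dobrushin {p : (x : X) → ({y : X // y ≠ x} → ℕ) → PMF ℕ}
    (hu : u < 1) (hr : ∀ x, ∑ z : {y // y ≠ x}, r x z ≤ u)
    (hcontr : ∀ (x : X) (ξ₁ ξ₂ : {y : X // y ≠ x} → ℕ),
      natVaserstein (p x ξ₁) (p x ξ₂) ≤ ∑ z : {y // y ≠ x}, r x z * Nat.dist (ξ₁ z) (ξ₂ z))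
    {μ₁ μ₂ : PMF (X → ℕ)} (h₁ : IsGibbsField p μ₁) (h₂ : IsGibbsField p μ₂) (η : X → ℕ) :
    μ₁ η ≤ μ₂ η := by
  suffices hgap : ∀ c : ℝ≥0∞, 0 < c → μ₁ η ≤ μ₂ η + Fintype.card X * c by
    refine ENNReal.le_of_forall_pos_le_add fun δ hδ _ => ?_
    have hc : 0 < (δ : ℝ≥0∞) / Fintype.card X :=
      ENNReal.div_pos (by exact_mod_cast hδ.ne') (ENNReal.natCast_ne_top _)
    exact (hgap _ hc).trans (by gcongr; exact ENNReal.mul_div_le)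
  intro c hc
  -- with `ε = (1 - u) c`, the bound `c` is the fixed point of `M ↦ u M + ε`
  have hε : (1 - u) * c ≠ 0 := mul_ne_zero (tsub_pos_of_lt hu).ne' hc.ne'
  have hfix : u * c + (1 - u) * c ≤ c := by rw [← add_mul, add_tsub_cancel_of_le hu.le, one_mul]
  choose C hC hcost using fun x ξ₁ ξ₂ => exists_isCoupling_expect_dist_le (hcontr x ξ₁ ξ₂) hε
  have hL (x : X) : x ∈ (Finset.univ : Finset X).toList := by simp
  set K := fun n => coupledSweep C (List.replicate n (Finset.univ : Finset X).toList).flatten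
  set ν₀ := μ₁.bind fun a => μ₂.map (Prod.mk a)
  have hcoupling (n : ℕ) : (ν₀.bind (K n)).IsCoupling μ₁ μ₂ :=
    (PMF.isCoupling_bind_map_prodMk μ₁ μ₂).bind_coupledSweep hC (h₁.bind_heatBath p)
      (h₂.bind_heatBath p) _
  rw [← tsub_le_iff_left]
  calc μ₁ η - μ₂ η ≤ limsup (fun n => (ν₀.bind (K n)).toOuterMeasure (Set.diagonal _)ᶜ) atTop :=
        le_limsup_of_frequently_le (Frequently.of_forall fun n =>
          tsub_le_iff_left.2 ((hcoupling n).apply_le_add η))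
    _ ≤ ∑' σ, ν₀ σ * limsup (fun n => (K n σ).toOuterMeasure (Set.diagonal _)ᶜ) atTop :=
        PMF.limsup_toOuterMeasure_bind_le ν₀ K _
    _ ≤ ∑' σ, ν₀ σ * (Fintype.card X * c) := ENNReal.tsum_le_tsum fun σ => by
        gcongr
        exact limsup_toOuterMeasure_coupledSweep_replicate_le hcost hr hu hfix hL σ
    _ = Fintype.card X * c := by rw [ENNReal.tsum_mul_right, ν₀.tsum_coe, one_mul]

end Uniqueness

/-- Dobrushin uniqueness for finitely many sites: if the single-site Vaserstein
distances are contracted by a matrix `r` with row sums `≤ u < 1`, then there is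
at most one Gibbs field with the given specification. -/
theorem dobrushin_uniqueness {X : Type*} [Fintype X] [DecidableEq X]
    (p : (x : X) → ({y : X // y ≠ x} → ℕ) → PMF ℕ)
    (r : X → X → ℝ≥0∞) (u : ℝ≥0∞) (hu : u < 1)
    (hrow : ∀ x, ∑ z : X, r x z ≤ u)
    (hcontr : ∀ (x : X) (n₁ n₂ : {y : X // y ≠ x} → ℕ),
      natVaserstein (p x n₁) (p x n₂) ≤
        ∑ z : {y : X // y ≠ x}, r x z.1 * (Nat.dist (n₁ z) (n₂ z) : ℝ≥0∞))
    (μ₁ μ₂ : PMF (X → ℕ))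
    (h₁ : IsGibbsField p μ₁) (h₂ : IsGibbsField p μ₂) :
    μ₁ = μ₂ := by
  have hr (x : X) : ∑ z : {y // y ≠ x}, r x z ≤ u :=
    le_self_add.trans ((Fintype.sum_subtype_add_sum_subtype (· ≠ x) (r x)).le.trans (hrow x))
  ext η
  exact le_antisymm (h₁.apply_le_of_dobrushin hu hr hcontr h₂ η)
    (h₂.apply_le_of_dobrushin hu hr hcontr h₁ η)
end
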